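/- arXiv:2409.08342 — 3 statements merged into one kernel-verified Lean document; each statement's English description precedes it below -/
import Mathlib

section
/- There exist integers k, n ≥ 2 such that C_c(k,n) is a proper subset of C_q(k,n); that is, there is a quantum correlation that is not a classical correlation (Bell's theorem). -/
open Matrix
open scoped Kronecker ComplexOrder

noncomputable section

/-- A POVM of length `n` on the finite-dimensional Hilbert space `ℂ^d` (with operators
given by matrices): a tuple of positive semidefinite matrices summing to the identity. -/
def IsMatPOVM {d n : ℕ} (A : Fin n → Matrix (Fin d) (Fin d) ℂ) : Prop :=
  (∀ i, (A i).PosSemidef) ∧ ∑ i, A i = 1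

/-- The set `C_q(k,n)` of quantum correlations, as a subset of `ℝ^{k²n²}`:
correlations `p(a,b|x,y) = ⟨(A^x_a ⊗ B^y_b)ξ, ξ⟩` arising from POVMs `A^x` and `B^y` of
length `n` on finite-dimensional Hilbert spaces `H_A`, `H_B` (of arbitrary dimensions)
and a unit vector `ξ ∈ H_A ⊗ H_B`; the tensor product of operators is the Kronecker
product of matrices. -/
def QCorr (k n : ℕ) : Set (Fin k → Fin k → Fin n → Fin n → ℝ) :=
  { p | ∃ (dA dB : ℕ)
      (A : Fin k → Fin n → Matrix (Fin dA) (Fin dA) ℂ)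
      (B : Fin k → Fin n → Matrix (Fin dB) (Fin dB) ℂ)
      (ξ : Fin dA × Fin dB → ℂ),
      (∀ x, IsMatPOVM (A x)) ∧ (∀ y, IsMatPOVM (B y)) ∧
      star ξ ⬝ᵥ ξ = 1 ∧
      ∀ x y a b, (p x y a b : ℂ) = star ξ ⬝ᵥ ((A x a ⊗ₖ B y b) *ᵥ ξ) }

/-- The deterministic correlation determined by answer functions `A B : [k] → [n]`. -/
def detCorr {k n : ℕ} (A B : Fin k → Fin n) : Fin k → Fin k → Fin n → Fin n → ℝ :=
  fun x y a b => if A x = a ∧ B y = b then 1 else 0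

/-- The set `C_c(k,n)` of classical correlations: the convex hull (in `ℝ^{k²n²}`) of the
deterministic correlations. -/
def CCorr (k n : ℕ) : Set (Fin k → Fin k → Fin n → Fin n → ℝ) :=
  convexHull ℝ { p | ∃ A B : Fin k → Fin n, p = detCorr A B }

/-!
Classical correlations are quantum: a convex combination `∑ wᵢ p_{Aᵢ,Bᵢ}` of deterministic
correlations is produced by the state `∑ √wᵢ eᵢ ⊗ eᵢ` together with diagonal measurements that
read off the answers `Aᵢ x`, `Bᵢ y` from the shared index `i`.

The CHSH functional is linear and bounded by `2` on every deterministic correlation, hence on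
`C_c(2,2)`. Measuring a maximally entangled pair of qubits in suitably rotated bases gives a
correlation of CHSH value `14/5 > 2`.
-/

def diagState {m : ℕ} (c : Fin m → ℂ) : Fin m × Fin m → ℂ :=
  fun ij => if ij.1 = ij.2 then c ij.1 else 0

lemma star_diagState_dotProduct {m : ℕ} (c : Fin m → ℂ) :
    star (diagState c) ⬝ᵥ diagState c = ∑ i, star (c i) * c i := by
  simp [diagState, dotProduct, Fintype.sum_prod_type, mul_ite]

lemma star_diagState_dotProduct_kronecker_mulVec {m : ℕ} (c : Fin m → ℂ)
    (A B : Matrix (Fin m) (Fin m) ℂ) :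
    star (diagState c) ⬝ᵥ ((A ⊗ₖ B) *ᵥ diagState c) =
      ∑ i, ∑ j, star (c i) * (A i j * B i j) * c j := by
  simp [diagState, dotProduct, mulVec, Fintype.sum_prod_type, kroneckerMap_apply, apply_ite,
    ite_mul, Finset.mul_sum, mul_assoc]

def indicatorPOVM {d n : ℕ} (f : Fin d → Fin n) : Fin n → Matrix (Fin d) (Fin d) ℂ :=
  fun a => diagonal fun i => if f i = a then 1 else 0

lemma isMatPOVM_indicatorPOVM {d n : ℕ} (f : Fin d → Fin n) : IsMatPOVM (indicatorPOVM f) := by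
  refine ⟨fun a => posSemidef_diagonal_iff.mpr fun i => ?_, ?_⟩
  · split_ifs <;> norm_num
  · ext i j
    by_cases h : i = j <;> simp [indicatorPOVM, Matrix.sum_apply, one_apply, h]

lemma sum_smul_detCorr_mem_QCorr {k n m : ℕ} (w : Fin m → ℝ) (hw₀ : ∀ i, 0 ≤ w i)
    (hw₁ : ∑ i, w i = 1) (A B : Fin m → Fin k → Fin n) :
    ∑ i, w i • detCorr (A i) (B i) ∈ QCorr k n := by
  have hsqrt (i : Fin m) : star (√(w i) : ℂ) * √(w i) = w i := by
    rw [Complex.star_def, Complex.conj_ofReal, ← Complex.ofReal_mul, Real.mul_self_sqrt (hw₀ i)]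
  refine ⟨m, m, fun x => indicatorPOVM fun i => A i x, fun y => indicatorPOVM fun i => B i y,
    diagState fun i => √(w i), fun x => isMatPOVM_indicatorPOVM _,
    fun y => isMatPOVM_indicatorPOVM _, ?_, fun x y a b => ?_⟩
  · simp_rw [star_diagState_dotProduct, hsqrt]
    exact_mod_cast hw₁
  · rw [star_diagState_dotProduct_kronecker_mulVec]
    push_cast [Finset.sum_apply, Pi.smul_apply, smul_eq_mul]
    refine Finset.sum_congr rfl fun i _ => ?_
    simp only [indicatorPOVM, diagonal_apply, detCorr, ite_mul, mul_ite, mul_zero, zero_mul,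
      Finset.sum_ite_eq, Finset.mem_univ, if_true, ← hsqrt i]
    split_ifs <;> simp_all

lemma CCorr_subset_QCorr (k n : ℕ) : CCorr k n ⊆ QCorr k n := by
  intro p hp
  obtain ⟨ι, _, w, z, hw₀, hw₁, hz, rfl⟩ := mem_convexHull_iff_exists_fintype.mp hp
  choose A B hAB using hz
  let e := Fintype.equivFin ι
  have := sum_smul_detCorr_mem_QCorr (w ∘ e.symm) (fun i => hw₀ _)
    (by rw [← hw₁]; exact e.symm.sum_comp w) (A ∘ e.symm) (B ∘ e.symm)
  simp_rw [hAB]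
  convert this using 1
  exact (e.symm.sum_comp fun i => w i • detCorr (A i) (B i)).symm

def correlator (p : Fin 2 → Fin 2 → Fin 2 → Fin 2 → ℝ) (x y : Fin 2) : ℝ :=
  p x y 0 0 + p x y 1 1 - p x y 0 1 - p x y 1 0

def chsh (p : Fin 2 → Fin 2 → Fin 2 → Fin 2 → ℝ) : ℝ :=
  correlator p 0 0 + correlator p 0 1 + correlator p 1 0 - correlator p 1 1

lemma isLinearMap_chsh : IsLinearMap ℝ chsh where
  map_add p q := by simp only [chsh, correlator, Pi.add_apply]; ring
  map_smul r p := by simp only [chsh, correlator, Pi.smul_apply, smul_eq_mul]; ring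

lemma chsh_detCorr_le_two (A B : Fin 2 → Fin 2) : chsh (detCorr A B) ≤ 2 := by
  have h2 (i : Fin 2) : i = 0 ∨ i = 1 := by fin_cases i <;> simp
  rcases h2 (A 0) with hA0 | hA0 <;> rcases h2 (A 1) with hA1 | hA1 <;>
    rcases h2 (B 0) with hB0 | hB0 <;> rcases h2 (B 1) with hB1 | hB1 <;>
    norm_num [chsh, correlator, detCorr, hA0, hA1, hB0, hB1]

lemma chsh_le_two_of_mem_CCorr {p : Fin 2 → Fin 2 → Fin 2 → Fin 2 → ℝ} (hp : p ∈ CCorr 2 2) :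
    chsh p ≤ 2 :=
  convexHull_min (by rintro _ ⟨A, B, rfl⟩; exact chsh_detCorr_le_two A B)
    (convex_halfSpace_le isLinearMap_chsh 2) hp

def lineProj (p q : ℝ) : Matrix (Fin 2) (Fin 2) ℂ :=
  (p ^ 2 + q ^ 2)⁻¹ • vecMulVec ![(p : ℂ), q] (star ![(p : ℂ), q])

lemma lineProj_apply (p q : ℝ) (i j : Fin 2) :
    lineProj p q i j = ((p ^ 2 + q ^ 2)⁻¹ * (![p, q] i * ![p, q] j) : ℝ) := by
  fin_cases i <;> fin_cases j <;> simp [lineProj, vecMulVec_apply, -cons_vecMulVec]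

lemma posSemidef_lineProj (p q : ℝ) : (lineProj p q).PosSemidef :=
  (posSemidef_vecMulVec_self_star _).smul (by positivity)

def qubitBasisPOVM (p q : ℝ) : Fin 2 → Matrix (Fin 2) (Fin 2) ℂ :=
  ![lineProj p q, lineProj (-q) p]

lemma isMatPOVM_qubitBasisPOVM {p q : ℝ} (hpq : p ^ 2 + q ^ 2 ≠ 0) :
    IsMatPOVM (qubitBasisPOVM p q) := by
  refine ⟨fun a => ?_, ?_⟩
  · fin_cases a <;> exact posSemidef_lineProj _ _
  · ext i j
    fin_cases i <;> fin_cases j <;>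
      simp [qubitBasisPOVM, lineProj_apply, Fin.sum_univ_two] <;> norm_cast <;>
      rw [add_comm (q ^ 2)] <;> field_simp <;> ring

def maxEntangled : Fin 2 × Fin 2 → ℂ :=
  diagState fun _ => ((√2)⁻¹ : ℝ)

lemma inv_sqrt_two_mul_self : ((√2 : ℝ) : ℂ)⁻¹ * ((√2 : ℝ) : ℂ)⁻¹ = 1 / 2 := by
  rw [← mul_inv, ← Complex.ofReal_mul, Real.mul_self_sqrt zero_le_two]
  norm_num

lemma star_maxEntangled_dotProduct : star maxEntangled ⬝ᵥ maxEntangled = 1 := by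
  rw [maxEntangled, star_diagState_dotProduct]
  simp only [Complex.ofReal_inv, star_inv₀, RCLike.star_def, Complex.conj_ofReal,
    Finset.sum_const, Finset.card_univ, Fintype.card_fin, nsmul_eq_mul, Nat.cast_ofNat]
  linear_combination 2 * inv_sqrt_two_mul_self

lemma star_maxEntangled_dotProduct_lineProj (p q p' q' : ℝ) :
    star maxEntangled ⬝ᵥ ((lineProj p q ⊗ₖ lineProj p' q') *ᵥ maxEntangled) =
      ((p ^ 2 + q ^ 2)⁻¹ * (p' ^ 2 + q' ^ 2)⁻¹ * (p * p' + q * q') ^ 2 / 2 : ℝ) := by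
  rw [maxEntangled, star_diagState_dotProduct_kronecker_mulVec]
  simp only [Complex.ofReal_inv, star_inv₀, RCLike.star_def, Complex.conj_ofReal, lineProj_apply,
    Fin.sum_univ_two, cons_val_zero, cons_val_one, Complex.ofReal_mul, Complex.ofReal_add,
    Complex.ofReal_pow, Complex.ofReal_div, Complex.ofReal_ofNat]
  linear_combination ((p ^ 2 + q ^ 2 : ℂ)⁻¹ * (p' ^ 2 + q' ^ 2 : ℂ)⁻¹ * (p * p' + q * q') ^ 2) *
    inv_sqrt_two_mul_self

/-- Measurement statistics of `maxEntangled` in the bases at angles `0, π/4` (Alice) and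
`± arctan (1/3)` (Bob): `p(a,b|x,y) = cos² (θₓ - φ_y) / 2` if `a = b`. These angles keep every
entry rational while still beating the classical CHSH bound (the optimum is `2√2`). -/
def quantumChshCorr : Fin 2 → Fin 2 → Fin 2 → Fin 2 → ℝ := fun x y a b =>
  if x = 1 ∧ y = 1 then (if a = b then 1 / 10 else 2 / 5)
  else if x = 1 then (if a = b then 2 / 5 else 1 / 10)
  else (if a = b then 9 / 20 else 1 / 20)

lemma chsh_quantumChshCorr : chsh quantumChshCorr = 14 / 5 := by
  norm_num [chsh, correlator, quantumChshCorr]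

lemma quantumChshCorr_mem_QCorr : quantumChshCorr ∈ QCorr 2 2 := by
  refine ⟨2, 2, ![qubitBasisPOVM 1 0, qubitBasisPOVM 1 1],
    ![qubitBasisPOVM 3 1, qubitBasisPOVM 3 (-1)], maxEntangled,
    fun x => ?_, fun y => ?_, star_maxEntangled_dotProduct, fun x y a b => ?_⟩
  · fin_cases x <;> exact isMatPOVM_qubitBasisPOVM (by norm_num)
  · fin_cases y <;> exact isMatPOVM_qubitBasisPOVM (by norm_num)
  · fin_cases x <;> fin_cases y <;> fin_cases a <;> fin_cases b <;>
      simp [qubitBasisPOVM, star_maxEntangled_dotProduct_lineProj, quantumChshCorr] <;> norm_num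

/-- Bell's theorem: there exist `k, n ≥ 2` for which the set of classical correlations is
a proper subset of the set of quantum correlations, i.e. there is a quantum correlation
that is not a classical correlation. -/
theorem bell_classical_proper_subset_quantum :
    ∃ k n : ℕ, 2 ≤ k ∧ 2 ≤ n ∧ CCorr k n ⊂ QCorr k n := by
  refine ⟨2, 2, le_rfl, le_rfl, (Set.ssubset_iff_of_subset (CCorr_subset_QCorr 2 2)).mpr
    ⟨quantumChshCorr, quantumChshCorr_mem_QCorr, fun hc => ?_⟩⟩
  have := chsh_le_two_of_mem_CCorr hc
  norm_num [chsh_quantumChshCorr] at this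

end
end

section
/- For all integers k, n ≥ 2: every correlation arising from commuting POVMs on a finite-dimensional Hilbert space belongs to C_qa(k,n). That is, if H is a finite-dimensional complex Hilbert space, A^x and B^y (x,y ∈ [k]) are POVMs of length n on H with A^x_a B^y_b = B^y_b A^x_a for all x,y ∈ [k], a,b ∈ [n], and ξ ∈ H is a unit vector, then the correlation p(a,b|x,y) = ⟨A^x_a B^y_b ξ, ξ⟩ lies in C_qa(k,n). -/
open Matrix
open scoped Kronecker ComplexOrder

noncomputable section

/-!
Let `𝒜` be the commutant of the `B`s and `ℬ` the commutant of `𝒜`: they commute and contain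
the `A`s and the `B`s respectively. On the span `S` of the Kronecker products `a ⊗ b`
(`a ∈ 𝒜`, `b ∈ ℬ`), the linear map `μ` sending `a ⊗ b` to `a * b` is then a `*`-homomorphism,
so `T ↦ ⟨μ(T) ξ, ξ⟩` is a state on the unital `*`-algebra of matrices `S`. The trace pairing
is nondegenerate on `S`, so this state is `T ↦ tr (r T)` for a density matrix `r ∈ S`, and
`p(a,b|x,y) = tr (r (A^x_a ⊗ B^y_b))`. Purifying `r` gives a tensor-product model of `p`.
-/

open scoped MatrixOrder

namespace Matrix

theorem star_dotProduct_reindex_mulVec {R ι κ : Type*} [Semiring R] [StarRing R] [Fintype ι]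
    [Fintype κ] (e : ι ≃ κ) (M : Matrix ι ι R) (v : ι → R) :
    star (v ∘ e.symm) ⬝ᵥ (reindex e e M *ᵥ (v ∘ e.symm)) = star v ⬝ᵥ (M *ᵥ v) := by
  rw [reindex_apply, submatrix_mulVec_equiv, Equiv.symm_symm, Function.comp_assoc,
    e.symm_comp_self, Function.comp_id]
  exact e.symm.sum_comp fun i => star (v i) * (M *ᵥ v) i

theorem star_dotProduct_kronecker_kronecker_one_mulVec {R I J K : Type*} [CommSemiring R]
    [StarRing R] [Fintype I] [Fintype J] [Fintype K] [DecidableEq K] (X : Matrix I I R)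
    (Y : Matrix J J R) (M : Matrix (I × J) K R) :
    star (fun q : I × J × K => M (q.1, q.2.1) q.2.2) ⬝ᵥ
        ((X ⊗ₖ (Y ⊗ₖ (1 : Matrix K K R))) *ᵥ fun q => M (q.1, q.2.1) q.2.2) =
      (M * Mᴴ * (X ⊗ₖ Y)).trace := by
  rw [trace_mul_comm]
  simp only [dotProduct, mulVec, trace, diag, mul_apply, conjTranspose_apply, kroneckerMap_apply,
    one_apply, Fintype.sum_prod_type, Pi.star_apply, mul_ite, ite_mul, mul_one, mul_zero, zero_mul,
    Finset.sum_ite_eq, Finset.mem_univ, if_true, Finset.mul_sum]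
  refine Finset.sum_congr rfl fun _ _ => Finset.sum_congr rfl fun _ _ => ?_
  rw [Finset.sum_comm]
  refine Finset.sum_congr rfl fun _ _ => ?_
  rw [Finset.sum_comm]
  exact Finset.sum_congr rfl fun _ _ => Finset.sum_congr rfl fun _ _ => by ring

variable {R : Type*} [CommSemiring R] {I : Type*} [Fintype I]

def kroneckerContract : Matrix (I × I) (I × I) R →ₗ[R] Matrix I I R where
  toFun T := of fun i j => ∑ k, T (i, k) (k, j)
  map_add' T T' := by ext; simp [Finset.sum_add_distrib]
  map_smul' c T := by ext; simp [Finset.mul_sum]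

@[simp]
theorem kroneckerContract_kronecker (a b : Matrix I I R) :
    kroneckerContract (a ⊗ₖ b) = a * b := by
  ext; simp [kroneckerContract, mul_apply]

end Matrix

namespace StarSubalgebra

section Kronecker

variable {R : Type*} [CommSemiring R] [StarRing R] {I J : Type*} [Fintype I] [DecidableEq I]
  [Fintype J] [DecidableEq J]

/-- The image of `𝒜 ⊗ ℬ` under the Kronecker product. -/
def kronecker (𝒜 : StarSubalgebra R (Matrix I I R)) (ℬ : StarSubalgebra R (Matrix J J R)) :
    StarSubalgebra R (Matrix (I × J) (I × J) R) where
  toSubalgebra := (Submodule.span R (Set.image2 (· ⊗ₖ ·) 𝒜 ℬ)).toSubalgebra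
    (Submodule.subset_span ⟨1, one_mem 𝒜, 1, one_mem ℬ, one_kronecker_one⟩)
    fun s t hs ht => by
      have hst := Submodule.mul_mem_mul hs ht
      rw [Submodule.span_mul_span] at hst
      refine Submodule.span_mono ?_ hst
      rintro _ ⟨_, ⟨a, ha, b, hb, rfl⟩, _, ⟨a', ha', b', hb', rfl⟩, rfl⟩
      exact ⟨a * a', mul_mem ha ha', b * b', mul_mem hb hb', mul_kronecker_mul ..⟩
  star_mem' {s} hs := by
    change s ∈ Submodule.span R _ at hs
    change star s ∈ Submodule.span R _
    induction hs using Submodule.span_induction with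
    | mem _ h =>
      obtain ⟨a, ha, b, hb, rfl⟩ := h
      exact Submodule.subset_span
        ⟨star a, star_mem ha, star b, star_mem hb, (conjTranspose_kronecker a b).symm⟩
    | zero => simp
    | add _ _ _ _ h₁ h₂ => rw [star_add]; exact Submodule.add_mem _ h₁ h₂
    | smul c _ _ h => rw [star_smul]; exact Submodule.smul_mem _ _ h

theorem kronecker_mem_kronecker {𝒜 : StarSubalgebra R (Matrix I I R)}
    {ℬ : StarSubalgebra R (Matrix J J R)} {a : Matrix I I R} {b : Matrix J J R}
    (ha : a ∈ 𝒜) (hb : b ∈ ℬ) : a ⊗ₖ b ∈ kronecker 𝒜 ℬ :=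
  Submodule.subset_span ⟨a, ha, b, hb, rfl⟩

end Kronecker

section Contract

variable {R : Type*} [CommSemiring R] [StarRing R] {I : Type*} [Fintype I] [DecidableEq I]
  {𝒜 ℬ : StarSubalgebra R (Matrix I I R)}

theorem kroneckerContract_mul (hcomm : ∀ a ∈ 𝒜, ∀ b ∈ ℬ, Commute a b)
    {s t : Matrix (I × I) (I × I) R} (hs : s ∈ kronecker 𝒜 ℬ) (ht : t ∈ kronecker 𝒜 ℬ) :
    kroneckerContract (s * t) = kroneckerContract s * kroneckerContract t := by
  have hgen : ∀ u ∈ Set.image2 (· ⊗ₖ ·) (𝒜 : Set (Matrix I I R)) ℬ,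
      kroneckerContract (u * t) = kroneckerContract u * kroneckerContract t := by
    rintro _ ⟨a, -, b, hb, rfl⟩
    refine LinearMap.eqOn_span (f := kroneckerContract ∘ₗ LinearMap.mulLeft R (a ⊗ₖ b))
      (g := LinearMap.mulLeft R (a * b) ∘ₗ kroneckerContract) ?_ ht
    rintro _ ⟨a', ha', b', -, rfl⟩
    simp [← mul_kronecker_mul, mul_assoc, (hcomm a' ha' b hb).left_comm]
  exact LinearMap.eqOn_span (f := kroneckerContract ∘ₗ LinearMap.mulRight R t)
    (g := LinearMap.mulRight R (kroneckerContract t) ∘ₗ kroneckerContract) hgen hs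

theorem kroneckerContract_star (hcomm : ∀ a ∈ 𝒜, ∀ b ∈ ℬ, Commute a b)
    {s : Matrix (I × I) (I × I) R} (hs : s ∈ kronecker 𝒜 ℬ) :
    kroneckerContract (star s) = star (kroneckerContract s) := by
  induction hs using Submodule.span_induction with
  | mem _ h =>
    obtain ⟨a, ha, b, hb, rfl⟩ := h
    simp [star_eq_conjTranspose, conjTranspose_kronecker, (hcomm a ha b hb).eq]
  | zero => simp
  | add _ _ _ _ h₁ h₂ => simp [h₁, h₂]
  | smul c _ _ h => simp [h]

end Contract

section Density

variable {𝕜 : Type*} [RCLike 𝕜] {I : Type*} [Fintype I] [DecidableEq I]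

theorem exists_isSelfAdjoint_trace_mul_eq (S : StarSubalgebra 𝕜 (Matrix I I 𝕜))
    (F : Matrix I I 𝕜 →ₗ[𝕜] 𝕜) (hF : ∀ s ∈ S, F (star s) = star (F s)) :
    ∃ r ∈ S, IsSelfAdjoint r ∧ ∀ s ∈ S, (r * s).trace = F s := by
  have : FiniteDimensional 𝕜 S :=
    Module.Finite.of_injective S.subtype.toLinearMap Subtype.val_injective
  let B : LinearMap.BilinForm 𝕜 S :=
    ((LinearMap.mul 𝕜 (Matrix I I 𝕜)).compl₁₂ S.subtype.toLinearMap S.subtype.toLinearMap).compr₂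
      (traceLinearMap I 𝕜 𝕜)
  have hB : ∀ u v : S, B u v = ((u : Matrix I I 𝕜) * v).trace := fun _ _ => rfl
  have hnd : B.Nondegenerate :=
    ⟨fun u hu => Subtype.ext <| trace_mul_conjTranspose_self_eq_zero_iff.mp (hu (star u)),
      fun v hv => Subtype.ext <| trace_conjTranspose_mul_self_eq_zero_iff.mp (hv (star v))⟩
  set u := (B.toDual hnd).symm (F ∘ₗ S.subtype.toLinearMap)
  have hu : ∀ s ∈ S, ((u : Matrix I I 𝕜) * s).trace = F s := fun s hs =>
    LinearMap.BilinForm.apply_toDual_symm_apply (hB := hnd) _ ⟨s, hs⟩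
  refine ⟨u, u.2, ?_, hu⟩
  have hu_star : star u = u := (B.toDual hnd).injective <| LinearMap.ext fun v => by
    rw [LinearMap.BilinForm.toDual_def, LinearMap.BilinForm.toDual_def, hB, hB]
    calc ((star u : S) * (v : Matrix I I 𝕜)).trace
        = star ((u : Matrix I I 𝕜) * star (v : Matrix I I 𝕜)).trace := by
          rw [← trace_conjTranspose, trace_mul_comm]; simp [star_eq_conjTranspose]
      _ = _ := by rw [hu _ (star_mem v.2), hF _ v.2, star_star, hu _ v.2]
  exact congrArg Subtype.val hu_star

theorem exists_posSemidef_trace_mul_eq (S : StarSubalgebra 𝕜 (Matrix I I 𝕜))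
    (F : Matrix I I 𝕜 →ₗ[𝕜] 𝕜) (hF : ∀ s ∈ S, F (star s) = star (F s))
    (hF_nonneg : ∀ s ∈ S, 0 ≤ F (star s * s)) :
    ∃ r : Matrix I I 𝕜, r.PosSemidef ∧ ∀ s ∈ S, (r * s).trace = F s := by
  obtain ⟨r, hrS, hr, hrF⟩ := S.exists_isSelfAdjoint_trace_mul_eq F hF
  refine ⟨r, nonneg_iff_posSemidef.mp ?_, hrF⟩
  have : IsClosed (S : Set (Matrix I I 𝕜)) :=
    have : FiniteDimensional 𝕜 (Subalgebra.toSubmodule S.toSubalgebra) :=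
      FiniteDimensional.finiteDimensional_submodule _
    (Subalgebra.toSubmodule S.toSubalgebra).closed_of_finiteDimensional
  -- `c` is the negative part of `r`, and `0 ≤ F (c * c) = tr (r c²) ≤ 0` forces it to vanish.
  set c := cfc (fun t : ℝ => min t 0) r
  have hcS : c ∈ S := cfc_mem _ hrS
  have hrcc : r * (star c * c) = cfc (fun t : ℝ => t * (min t 0 * min t 0)) r := by
    rw [cfc_mul .., cfc_mul .., cfc_id' ℝ r, (cfc_predicate _ r : IsSelfAdjoint c).star_eq]
  have hg : ∀ t : ℝ, 0 ≤ -(t * (min t 0 * min t 0)) := fun t => by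
    rcases le_total t 0 with h | h
    · rw [min_eq_left h]; nlinarith [mul_self_nonneg t]
    · simp [min_eq_right h]
  have hP : (cfc (fun t : ℝ => -(t * (min t 0 * min t 0))) r).PosSemidef :=
    nonneg_iff_posSemidef.mp (cfc_nonneg fun t _ => hg t)
  have hP0 : cfc (fun t : ℝ => -(t * (min t 0 * min t 0))) r = cfc (0 : ℝ → ℝ) r := by
    rw [cfc_zero]
    refine hP.trace_eq_zero_iff.mp (le_antisymm ?_ hP.trace_nonneg)
    rw [cfc_neg, ← hrcc, trace_neg, hrF _ (mul_mem (star_mem hcS) hcS), neg_nonpos]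
    exact hF_nonneg c hcS
  refine (StarOrderedRing.nonneg_iff_spectrum_nonneg (R := ℝ) r).mpr fun t ht => ?_
  have ht0 : -(t * (min t 0 * min t 0)) = 0 := (eqOn_of_cfc_eq_cfc hP0 (ha := hr)) ht
  by_contra! h
  rw [min_eq_left h.le] at ht0
  nlinarith [mul_pos_of_neg_of_neg h h]

theorem exists_posSemidef_trace_mul_kronecker_eq {𝒜 ℬ : StarSubalgebra 𝕜 (Matrix I I 𝕜)}
    (hcomm : ∀ a ∈ 𝒜, ∀ b ∈ ℬ, Commute a b) (ξ : I → 𝕜) :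
    ∃ r : Matrix (I × I) (I × I) 𝕜, r.PosSemidef ∧
      ∀ a ∈ 𝒜, ∀ b ∈ ℬ, (r * (a ⊗ₖ b)).trace = star ξ ⬝ᵥ ((a * b) *ᵥ ξ) := by
  let F : Matrix (I × I) (I × I) 𝕜 →ₗ[𝕜] 𝕜 :=
    { toFun T := star ξ ⬝ᵥ (kroneckerContract T *ᵥ ξ)
      map_add' T T' := by simp [add_mulVec]
      map_smul' c T := by simp [smul_mulVec] }
  have hF : ∀ T, F T = star ξ ⬝ᵥ (kroneckerContract T *ᵥ ξ) := fun _ => rfl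
  obtain ⟨r, hr, hrF⟩ := (kronecker 𝒜 ℬ).exists_posSemidef_trace_mul_eq F
    (fun s hs => by
      rw [hF, hF, kroneckerContract_star hcomm hs, star_eq_conjTranspose, dotProduct_mulVec,
        ← star_mulVec, star_dotProduct])
    (fun s hs => by
      rw [hF, kroneckerContract_mul hcomm (star_mem hs) hs, kroneckerContract_star hcomm hs,
        star_eq_conjTranspose]
      exact (posSemidef_conjTranspose_mul_self _).dotProduct_mulVec_nonneg ξ)
  exact ⟨r, hr, fun a ha b hb => by
    rw [hrF _ (kronecker_mem_kronecker ha hb), hF, kroneckerContract_kronecker]⟩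

end Density

end StarSubalgebra

theorem isMatPOVM_reindex {ι : Type*} [DecidableEq ι] {n d : ℕ} (e : ι ≃ Fin d)
    {A : Fin n → Matrix ι ι ℂ} (hA : (∀ a, (A a).PosSemidef) ∧ ∑ a, A a = 1) :
    IsMatPOVM fun a => reindex e e (A a) := by
  refine ⟨fun a => (posSemidef_submatrix_equiv e.symm).mpr (hA.1 a), ?_⟩
  have := congrArg (reindexLinearEquiv ℂ ℂ e e) hA.2
  rwa [map_sum, reindexLinearEquiv_one] at this

section Models

variable {k n : ℕ} {ιA ιB : Type*} [Fintype ιA] [DecidableEq ιA] [Fintype ιB] [DecidableEq ιB]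

theorem mem_QCorr_of_fintype
    (A : Fin k → Fin n → Matrix ιA ιA ℂ) (B : Fin k → Fin n → Matrix ιB ιB ℂ)
    (hA : ∀ x, (∀ a, (A x a).PosSemidef) ∧ ∑ a, A x a = 1)
    (hB : ∀ y, (∀ b, (B y b).PosSemidef) ∧ ∑ b, B y b = 1)
    (ξ : ιA × ιB → ℂ) (hξ : star ξ ⬝ᵥ ξ = 1) (p : Fin k → Fin k → Fin n → Fin n → ℝ)
    (hp : ∀ x y a b, (p x y a b : ℂ) = star ξ ⬝ᵥ ((A x a ⊗ₖ B y b) *ᵥ ξ)) :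
    p ∈ QCorr k n := by
  let eA := Fintype.equivFin ιA
  let eB := Fintype.equivFin ιB
  let e := eA.prodCongr eB
  refine ⟨_, _, fun x a => reindex eA eA (A x a), fun y b => reindex eB eB (B y b), ξ ∘ e.symm,
    fun x => isMatPOVM_reindex eA (hA x), fun y => isMatPOVM_reindex eB (hB y), ?_, ?_⟩
  · simpa using (star_dotProduct_reindex_mulVec e 1 ξ).trans (by simpa using hξ)
  · intro x y a b
    rw [kroneckerMap_reindex, star_dotProduct_reindex_mulVec, hp]

theorem mem_QCorr_of_posSemidef
    (A : Fin k → Fin n → Matrix ιA ιA ℂ) (B : Fin k → Fin n → Matrix ιB ιB ℂ)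
    (hA : ∀ x, (∀ a, (A x a).PosSemidef) ∧ ∑ a, A x a = 1)
    (hB : ∀ y, (∀ b, (B y b).PosSemidef) ∧ ∑ b, B y b = 1)
    (r : Matrix (ιA × ιB) (ιA × ιB) ℂ) (hr : r.PosSemidef) (hr_trace : r.trace = 1)
    (p : Fin k → Fin k → Fin n → Fin n → ℝ)
    (hp : ∀ x y a b, (p x y a b : ℂ) = (r * (A x a ⊗ₖ B y b)).trace) :
    p ∈ QCorr k n := by
  obtain ⟨N, rfl⟩ := CStarAlgebra.nonneg_iff_eq_star_mul_self.mp hr.nonneg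
  have hNN : Nᴴ * Nᴴᴴ = star N * N := by rw [conjTranspose_conjTranspose, star_eq_conjTranspose]
  -- purification of `r = Nᴴ Nᴴᴴ`
  refine mem_QCorr_of_fintype A (fun y b => B y b ⊗ₖ (1 : Matrix (ιA × ιB) (ιA × ιB) ℂ)) hA
    (fun y => ⟨fun b => (hB y).1 b |>.kronecker PosSemidef.one, ?_⟩)
    (fun q => Nᴴ (q.1, q.2.1) q.2.2) ?_ p fun x y a b => ?_
  · have hsum : ∑ b, B y b ⊗ₖ (1 : Matrix (ιA × ιB) (ιA × ιB) ℂ) = (∑ b, B y b) ⊗ₖ 1 := by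
      ext; simp [Matrix.sum_apply, Finset.sum_mul]
    rw [hsum, (hB y).2, one_kronecker_one]
  · have h := star_dotProduct_kronecker_kronecker_one_mulVec
      (1 : Matrix ιA ιA ℂ) (1 : Matrix ιB ιB ℂ) Nᴴ
    rwa [one_kronecker_one, one_kronecker_one, one_kronecker_one, one_mulVec, mul_one, hNN,
      hr_trace] at h
  · rw [star_dotProduct_kronecker_kronecker_one_mulVec, hNN, hp]

end Models

theorem finite_dim_commuting_mem_qa_general (k n : ℕ) (d : ℕ)
    (A B : Fin k → Fin n → Matrix (Fin d) (Fin d) ℂ)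
    (hA : ∀ x, IsMatPOVM (A x)) (hB : ∀ y, IsMatPOVM (B y))
    (hcomm : ∀ x y a b, A x a * B y b = B y b * A x a)
    (ξ : Fin d → ℂ) (hξ : star ξ ⬝ᵥ ξ = 1)
    (p : Fin k → Fin k → Fin n → Fin n → ℝ)
    (hp : ∀ x y a b, (p x y a b : ℂ) = star ξ ⬝ᵥ ((A x a * B y b) *ᵥ ξ)) :
    p ∈ closure (QCorr k n) := by
  refine subset_closure ?_
  let 𝒜 := StarSubalgebra.centralizer ℂ (Set.range (Function.uncurry B))
  let ℬ := StarSubalgebra.centralizer ℂ (𝒜 : Set (Matrix (Fin d) (Fin d) ℂ))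
  have hA𝒜 : ∀ x a, A x a ∈ 𝒜 := fun x a => (StarSubalgebra.mem_centralizer_iff ℂ).mpr <| by
    rintro _ ⟨⟨y, b⟩, rfl⟩
    simp only [Function.uncurry_apply_pair, ((hB y).1 b).isHermitian.star_eq, hcomm, and_self]
  have hBℬ : ∀ y b, B y b ∈ ℬ := fun y b => StarAlgebra.adjoin_le_centralizer_centralizer ℂ _
    (StarAlgebra.subset_adjoin ℂ _ ⟨(y, b), rfl⟩)
  obtain ⟨r, hr, hrp⟩ := StarSubalgebra.exists_posSemidef_trace_mul_kronecker_eq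
    (fun a ha b hb => ((StarSubalgebra.mem_centralizer_iff ℂ).mp hb a ha).1) ξ
  have hr_trace : r.trace = 1 := by
    simpa [hξ] using hrp 1 (one_mem 𝒜) 1 (one_mem ℬ)
  exact mem_QCorr_of_posSemidef A B hA hB r hr hr_trace p fun x y a b => by
    rw [hrp _ (hA𝒜 x a) _ (hBℬ y b), hp]

/-- Every correlation arising from commuting POVMs on a finite-dimensional Hilbert space
belongs to `C_qa(k,n) = closure C_q(k,n)`: if `A^x` and `B^y` are POVMs of length `n` on
`ℂ^d` with `A^x_a B^y_b = B^y_b A^x_a` for all `x, y, a, b`, and `ξ ∈ ℂ^d` is a unit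
vector, then `p(a,b|x,y) = ⟨A^x_a B^y_b ξ, ξ⟩` lies in the closure of `C_q(k,n)`. -/
theorem finite_dim_commuting_mem_qa (k n : ℕ) (hk : 2 ≤ k) (hn : 2 ≤ n) (d : ℕ)
    (A B : Fin k → Fin n → Matrix (Fin d) (Fin d) ℂ)
    (hA : ∀ x, IsMatPOVM (A x)) (hB : ∀ y, IsMatPOVM (B y))
    (hcomm : ∀ x y a b, A x a * B y b = B y b * A x a)
    (ξ : Fin d → ℂ) (hξ : star ξ ⬝ᵥ ξ = 1)
    (p : Fin k → Fin k → Fin n → Fin n → ℝ)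
    (hp : ∀ x y a b, (p x y a b : ℂ) = star ξ ⬝ᵥ ((A x a * B y b) *ᵥ ξ)) :
    p ∈ closure (QCorr k n) :=
  finite_dim_commuting_mem_qa_general k n d A B hA hB hcomm ξ hξ p hp
end
end

section
/- For all integers k, n ≥ 2, the closure of C^s_q(k,n) in ℝ^{k²n²} equals the closure of the set of matrix tracial PVM correlations, namely the set of tuples p ∈ [0,1]^{k²n²} of the form p(a,b|x,y) = tr(e^x_a e^y_b)/d, where d ≥ 1 and e^1, …, e^k are PVMs of length n in the matrix algebra M_d(ℂ). -/
open Matrix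
open scoped Kronecker ComplexOrder

noncomputable section

/-- A correlation is synchronous if equal questions never receive distinct answers:
`p(a,b|x,x) = 0` for all `x` and all `a ≠ b`. -/
def Synchronous {k n : ℕ} (p : Fin k → Fin k → Fin n → Fin n → ℝ) : Prop :=
  ∀ x a b, a ≠ b → p x x a b = 0

/-- The set of matrix tracial PVM correlations: correlations of the form
`p(a,b|x,y) = tr(e^x_a e^y_b)/d` for some `d ≥ 1` and PVMs `e^1, …, e^k` of length `n`
in the matrix algebra `M_d(ℂ)` (tuples of self-adjoint idempotents summing to `1`). -/
def MatTracialPVMCorr (k n : ℕ) : Set (Fin k → Fin k → Fin n → Fin n → ℝ) :=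
  { p | ∃ (d : ℕ) (_ : 1 ≤ d) (e : Fin k → Fin n → Matrix (Fin d) (Fin d) ℂ),
      (∀ x a, (e x a)ᴴ = e x a ∧ e x a * e x a = e x a) ∧
      (∀ x, ∑ a, e x a = 1) ∧
      ∀ x y a b, (p x y a b : ℂ) = (e x a * e y b).trace / (d : ℂ) }

/-! For a synchronous quantum correlation given by POVMs `A`, `B` and a vector `ξ`, read as a matrix
`X`, the vanishing of `tr(Aˣₐ X (Bˣ_b)ᵀ Xᴴ)` for `a ≠ b` forces `Aˣₐ X = X (Bˣₐ)ᵀ`. So the density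
matrix `M = X Xᴴ` commutes with every `Aˣₐ`, each `Aˣₐ` is a projection on the support of `M`, and
`p(a,b|x,y) = tr(Aˣₐ Aʸ_b M)`. In an eigenbasis of `M` with eigenvalues `wᵢ` this is
`∑ᵢ wᵢ (eˣₐ eʸ_b)ᵢᵢ`. When the weights are rational, `wᵢ = cᵢ / N`, repeating the `i`-th basis
vector `cᵢ` times turns it into a normalized trace of PVMs in dimension `N`; general weights are
limits of rational ones. Conversely, a tracial PVM correlation comes from `e` and `eᵀ` on the
maximally entangled state. -/

open Filter Topology
open scoped MatrixOrder

namespace Matrix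

variable {ι κ R : Type*} [Fintype ι]

theorem submatrix_mul_submatrix_of_apply_eq_zero [NonUnitalNonAssocSemiring R] {f : κ → ι}
    [Fintype κ] (hf : Function.Injective f) {X : Matrix ι ι R} (Y : Matrix ι ι R)
    (hX : ∀ i j, j ∉ Set.range f → X (f i) j = 0) :
    X.submatrix f f * Y.submatrix f f = (X * Y).submatrix f f := by
  ext i j
  simp only [mul_apply, submatrix_apply]
  calc ∑ l, X (f i) (f l) * Y (f l) (f j)
      = ∑ l ∈ Finset.univ.map ⟨f, hf⟩, X (f i) l * Y l (f j) :=
        (Finset.sum_map Finset.univ ⟨f, hf⟩ fun l => X (f i) l * Y l (f j)).symm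
    _ = ∑ l, X (f i) l * Y l (f j) := Finset.sum_subset (Finset.subset_univ _) fun l _ hl => by
      rw [hX i l (by simpa using hl), zero_mul]

variable {𝕜 : Type*} [RCLike 𝕜]

theorem IsHermitian.coe_re_trace_mul {A B : Matrix ι ι 𝕜} (hA : A.IsHermitian)
    (hB : B.IsHermitian) :
    (RCLike.re (A * B).trace : 𝕜) = (A * B).trace := by
  rw [← RCLike.conj_eq_iff_re, ← RCLike.star_def, ← trace_conjTranspose, conjTranspose_mul,
    hA.eq, hB.eq, trace_mul_comm]

variable [DecidableEq ι]

theorem apply_eq_zero_of_commute_diagonal [CommRing R] [NoZeroDivisors R] {X : Matrix ι ι R}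
    {d : ι → R} (h : Commute X (diagonal d)) {i j : ι} (hij : d i ≠ d j) : X i j = 0 := by
  have hij' := congr_fun₂ h.eq i j
  rw [mul_diagonal, diagonal_mul] at hij'
  have : (d j - d i) * X i j = 0 := by linear_combination hij'
  exact (mul_eq_zero.mp this).resolve_left (sub_ne_zero.mpr hij.symm)

theorem apply_eq_of_mul_diagonal_eq [CommRing R] [IsDomain R] {X Y : Matrix ι ι R} {d : ι → R}
    (h : X * diagonal d = Y * diagonal d) (i : ι) {j : ι} (hj : d j ≠ 0) : X i j = Y i j := by
  have hij := congr_fun₂ h i j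
  rw [mul_diagonal, mul_diagonal] at hij
  exact mul_right_cancel₀ hj hij

theorem PosSemidef.mul_mul_eq_zero_of_trace_eq_zero [Fintype κ] [DecidableEq κ]
    {P : Matrix ι ι 𝕜} {Q : Matrix κ κ 𝕜} (hP : P.PosSemidef) (hQ : Q.PosSemidef)
    {X : Matrix ι κ 𝕜} (h : (P * X * Q * Xᴴ).trace = 0) : P * X * Q = 0 := by
  obtain ⟨S, rfl⟩ := CStarAlgebra.nonneg_iff_eq_star_mul_self.mp hP.nonneg
  obtain ⟨T, rfl⟩ := CStarAlgebra.nonneg_iff_eq_star_mul_self.mp hQ.nonneg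
  simp only [star_eq_conjTranspose] at h ⊢
  have hY : S * X * Tᴴ = 0 := by
    rw [← trace_mul_conjTranspose_self_eq_zero_iff, ← h]
    simp only [conjTranspose_mul, conjTranspose_conjTranspose, Matrix.mul_assoc]
    rw [trace_mul_comm Sᴴ]
    simp only [Matrix.mul_assoc]
  calc Sᴴ * S * X * (Tᴴ * T) = Sᴴ * (S * X * Tᴴ) * T := by simp only [Matrix.mul_assoc]
    _ = 0 := by rw [hY, Matrix.mul_zero, Matrix.zero_mul]

end Matrix

structure IsPVM {α R : Type*} [Fintype α] [Semiring R] [Star R] (e : α → R) : Prop where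
  isStarProjection : ∀ a, IsStarProjection (e a)
  sum_eq_one : ∑ a, e a = 1

theorem IsPVM.mul_eq_zero {α ι 𝕜 : Type*} [Fintype α] [DecidableEq α] [Fintype ι] [DecidableEq ι]
    [RCLike 𝕜] {e : α → Matrix ι ι 𝕜} (he : IsPVM e) {a b : α} (hab : a ≠ b) : e a * e b = 0 := by
  have hsa : ∀ c, (e c)ᴴ = e c := fun c => (he.isStarProjection c).isSelfAdjoint.star_eq
  have hsq : ∀ c, (e c * e a)ᴴ * (e c * e a) = e a * e c * e a := fun c => by
    rw [conjTranspose_mul, hsa, hsa, Matrix.mul_assoc, ← Matrix.mul_assoc (e c),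
      (he.isStarProjection c).isIdempotentElem.eq, Matrix.mul_assoc]
  have hsum : ∑ c ∈ Finset.univ.erase a, ((e c * e a)ᴴ * (e c * e a)).trace = 0 := by
    simp only [hsq, ← trace_sum, ← Finset.sum_mul, ← Finset.mul_sum]
    rw [Finset.sum_erase_eq_sub (Finset.mem_univ a), he.sum_eq_one,
      (he.isStarProjection a).mul_one_sub_self, Matrix.zero_mul, trace_zero]
  have hba := (Finset.sum_eq_zero_iff_of_nonneg fun c _ =>
    (posSemidef_conjTranspose_mul_self (e c * e a)).trace_nonneg).mp hsum b
    (Finset.mem_erase.mpr ⟨hab.symm, Finset.mem_univ b⟩)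
  have := congrArg conjTranspose (trace_conjTranspose_mul_self_eq_zero_iff.mp hba)
  rwa [conjTranspose_mul, hsa, hsa, conjTranspose_zero] at this

section Inflation

variable {ι R : Type*} [Fintype ι] (w : ι → ℕ)

def multiplicityEmbedding : (Σ i, Fin (w i)) → ι × Fin (∑ i, w i) := fun s =>
  (s.1, Fin.castLE (Finset.single_le_sum (fun j _ => Nat.zero_le (w j)) (Finset.mem_univ s.1))
    s.2)

theorem multiplicityEmbedding_injective : Function.Injective (multiplicityEmbedding w) := by
  rintro ⟨i, t⟩ ⟨j, u⟩ h
  simp only [multiplicityEmbedding, Prod.mk.injEq] at h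
  obtain ⟨rfl, h⟩ := h
  rw [Fin.castLE_inj.mp h]

def inflate [Zero R] [One R] [Mul R] (X : Matrix ι ι R) :
    Matrix (Σ i, Fin (w i)) (Σ i, Fin (w i)) R :=
  (X ⊗ₖ (1 : Matrix (Fin (∑ i, w i)) (Fin (∑ i, w i)) R)).submatrix
    (multiplicityEmbedding w) (multiplicityEmbedding w)

variable {w} [CommSemiring R]

theorem inflate_apply (X : Matrix ι ι R) (s t : Σ i, Fin (w i)) :
    inflate w X s t = if (s.2 : ℕ) = t.2 then X s.1 t.1 else 0 := by
  simp only [inflate, submatrix_apply, kroneckerMap_apply, multiplicityEmbedding, one_apply,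
    Fin.ext_iff, Fin.val_castLE, mul_ite, mul_one, mul_zero]

theorem inflate_mul {X : Matrix ι ι R} (hX : ∀ i j, w i ≠ w j → X i j = 0) (Y : Matrix ι ι R) :
    inflate w X * inflate w Y = inflate w (X * Y) := by
  rw [inflate, inflate, submatrix_mul_submatrix_of_apply_eq_zero
    (multiplicityEmbedding_injective w), ← mul_kronecker_mul, Matrix.one_mul, inflate]
  rintro ⟨i, t⟩ ⟨j, u⟩ hq
  simp only [multiplicityEmbedding, kroneckerMap_apply, one_apply, Fin.ext_iff, Fin.val_castLE]
  split_ifs with htu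
  · have hwj : ¬ (u : ℕ) < w j := fun hu => hq ⟨⟨j, ⟨u, hu⟩⟩, rfl⟩
    rw [hX i j (by omega), zero_mul]
  · rw [mul_zero]

theorem inflate_congr {X Y : Matrix ι ι R} (h : ∀ i j, w j ≠ 0 → X i j = Y i j) :
    inflate w X = inflate w Y := by
  ext s t
  rw [inflate_apply, inflate_apply, h _ _ (Fin.pos t.2).ne']

theorem inflate_one [DecidableEq ι] : inflate w (1 : Matrix ι ι R) = 1 := by
  rw [inflate, one_kronecker_one, submatrix_one _ (multiplicityEmbedding_injective w)]

theorem sum_inflate {α : Type*} [Fintype α] (X : α → Matrix ι ι R) :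
    ∑ a, inflate w (X a) = inflate w (∑ a, X a) := by
  ext s t
  simp only [Matrix.sum_apply, inflate_apply]
  split_ifs <;> simp

theorem conjTranspose_inflate [StarRing R] (X : Matrix ι ι R) :
    (inflate w X)ᴴ = inflate w Xᴴ := by
  rw [inflate, inflate, conjTranspose_submatrix, conjTranspose_kronecker, conjTranspose_one]

theorem trace_inflate (X : Matrix ι ι R) : (inflate w X).trace = ∑ i, (w i : R) * X i i := by
  simp [trace, inflate_apply, Fintype.sum_sigma]

end Inflation

section WeightedPVM

variable {α ι : Type*} [Fintype α] [Fintype ι] [DecidableEq ι]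

/-- The form a POVM of a synchronous strategy takes in an eigenbasis of the density matrix, whose
eigenvalues are `w`. -/
structure IsWeightedPVM {β : Type*} [Zero β] (w : ι → β) (e : α → Matrix ι ι ℂ) : Prop where
  isHermitian : ∀ a, (e a).IsHermitian
  sum_eq_one : ∑ a, e a = 1
  apply_eq_zero : ∀ a i j, w i ≠ w j → e a i j = 0
  mul_self_apply : ∀ a i j, w j ≠ 0 → (e a * e a) i j = e a i j

theorem IsWeightedPVM.comp {β γ : Type*} [Zero β] [Zero γ] {w : ι → β} {e : α → Matrix ι ι ℂ}
    (h : IsWeightedPVM w e) (f : β → γ) (hf : f 0 = 0) : IsWeightedPVM (f ∘ w) e where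
  isHermitian := h.isHermitian
  sum_eq_one := h.sum_eq_one
  apply_eq_zero a i j hij := h.apply_eq_zero a i j fun h' => hij (by simp [h'])
  mul_self_apply a i j hj := h.mul_self_apply a i j fun h' => hj (by simp [h', hf])

theorem IsWeightedPVM.isPVM_inflate {w : ι → ℕ} {e : α → Matrix ι ι ℂ} (h : IsWeightedPVM w e) :
    IsPVM fun a => inflate w (e a) where
  isStarProjection a :=
    { isIdempotentElem := by
        rw [IsIdempotentElem, inflate_mul (h.apply_eq_zero a)]
        exact inflate_congr (h.mul_self_apply a)
      isSelfAdjoint := by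
        rw [IsSelfAdjoint, star_eq_conjTranspose, conjTranspose_inflate, (h.isHermitian a).eq] }
  sum_eq_one := by rw [sum_inflate, h.sum_eq_one, inflate_one]

end WeightedPVM

theorem mem_matTracialPVMCorr_of_isPVM {k n : ℕ} {κ : Type*} [Fintype κ] [DecidableEq κ]
    [Nonempty κ] {e : Fin k → Fin n → Matrix κ κ ℂ} (he : ∀ x, IsPVM (e x)) :
    (fun x y a b => ((e x a * e y b).trace / Fintype.card κ).re) ∈ MatTracialPVMCorr k n := by
  have hsa : ∀ x a, (e x a)ᴴ = e x a := fun x a =>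
    ((he x).isStarProjection a).isSelfAdjoint.star_eq
  let g := Fintype.equivFin κ
  let φ := reindexAlgEquiv ℂ ℂ g
  refine ⟨Fintype.card κ, Fintype.card_pos, fun x a => φ (e x a), fun x a => ⟨?_, ?_⟩,
    fun x => ?_, fun x y a b => ?_⟩
  · rw [coe_reindexAlgEquiv, conjTranspose_reindex, hsa]
  · rw [← map_mul, ((he x).isStarProjection a).isIdempotentElem.eq]
  · rw [← map_sum, (he x).sum_eq_one, map_one]
  · have htrace : (φ (e x a * e y b)).trace = (e x a * e y b).trace :=
      Fintype.sum_equiv g.symm _ _ fun _ => rfl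
    rw [← map_mul, htrace]
    dsimp only
    rw [Complex.div_natCast_re, Complex.ofReal_div, Complex.ofReal_natCast,
      ← RCLike.re_to_complex]
    exact congrArg (· / _) (IsHermitian.coe_re_trace_mul (hsa x a) (hsa y b))

theorem tendsto_natCeil_mul_div_sum {ι : Type*} [Fintype ι] {w : ι → ℝ} (h0 : ∀ i, 0 ≤ w i)
    (h1 : ∑ i, w i = 1) :
    Tendsto (fun m : ℕ => fun i => (⌈w i * m⌉₊ : ℝ) / ∑ j, (⌈w j * m⌉₊ : ℝ)) atTop (𝓝 w) := by
  have hlim : ∀ i, Tendsto (fun m : ℕ => (⌈w i * m⌉₊ : ℝ) / m) atTop (𝓝 (w i)) := fun i =>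
    (tendsto_nat_ceil_mul_div_atTop (h0 i)).comp tendsto_natCast_atTop_atTop
  have hsum : Tendsto (fun m : ℕ => ∑ j, (⌈w j * m⌉₊ : ℝ) / m) atTop (𝓝 1) :=
    h1 ▸ tendsto_finsetSum _ fun j _ => hlim j
  refine tendsto_pi_nhds.mpr fun i => ?_
  have hquot := (hlim i).div hsum one_ne_zero
  rw [div_one] at hquot
  refine hquot.congr' ?_
  filter_upwards [eventually_ne_atTop 0] with m hm
  rw [Pi.div_apply, ← Finset.sum_div, div_div_div_cancel_right₀ (Nat.cast_ne_zero.mpr hm)]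

section WeightedCorr

variable {k n : ℕ} {ι : Type*} [Fintype ι]

/-- The correlation `tr(eˣₐ eʸ_b · diag w)` of the state with diagonal density matrix `diag w`. -/
def weightedCorr (w : ι → ℝ) (e : Fin k → Fin n → Matrix ι ι ℂ) :
    Fin k → Fin k → Fin n → Fin n → ℝ :=
  fun x y a b => ∑ i, w i * ((e x a * e y b) i i).re

theorem continuous_weightedCorr (e : Fin k → Fin n → Matrix ι ι ℂ) :
    Continuous fun w : ι → ℝ => weightedCorr w e := by
  unfold weightedCorr
  fun_prop

variable [DecidableEq ι]

theorem weightedCorr_mem_matTracialPVMCorr {w : ι → ℕ} (hw : w ≠ 0)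
    {e : Fin k → Fin n → Matrix ι ι ℂ} (he : ∀ x, IsWeightedPVM w (e x)) :
    weightedCorr (fun i => (w i : ℝ) / ∑ j, (w j : ℝ)) e ∈ MatTracialPVMCorr k n := by
  obtain ⟨i, hi⟩ := Function.ne_iff.mp hw
  have : Nonempty (Σ i, Fin (w i)) := ⟨⟨i, ⟨0, Nat.pos_of_ne_zero hi⟩⟩⟩
  convert mem_matTracialPVMCorr_of_isPVM fun x => (he x).isPVM_inflate using 1
  ext x y a b
  simp [weightedCorr, inflate_mul ((he x).apply_eq_zero a), trace_inflate, Complex.re_sum,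
    Finset.sum_div, div_mul_eq_mul_div, ← Nat.cast_sum, Complex.div_natCast_re]

theorem weightedCorr_mem_closure {w : ι → ℝ} (h0 : ∀ i, 0 ≤ w i) (h1 : ∑ i, w i = 1)
    {e : Fin k → Fin n → Matrix ι ι ℂ} (he : ∀ x, IsWeightedPVM w (e x)) :
    weightedCorr w e ∈ closure (MatTracialPVMCorr k n) := by
  refine mem_closure_of_tendsto
    (((continuous_weightedCorr e).tendsto w).comp (tendsto_natCeil_mul_div_sum h0 h1)) ?_
  obtain ⟨i, hi⟩ : ∃ i, 0 < w i := by
    by_contra! h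
    linarith [Finset.sum_nonpos fun i (_ : i ∈ Finset.univ) => h i]
  filter_upwards [eventually_gt_atTop 0] with m hm
  have hpos : ⌈w i * m⌉₊ ≠ 0 := (Nat.ceil_pos.mpr (by positivity)).ne'
  exact weightedCorr_mem_matTracialPVMCorr (fun h => hpos (congr_fun h i))
    fun x => (he x).comp (fun t => ⌈t * m⌉₊) (by simp)

end WeightedCorr

theorem mem_closure_matTracialPVMCorr_of_density {k n : ℕ} {ι : Type*} [Fintype ι]
    [DecidableEq ι] {M : Matrix ι ι ℂ} (hM : M.PosSemidef) (hM1 : M.trace = 1)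
    {A : Fin k → Fin n → Matrix ι ι ℂ}
    (hA : ∀ x a, (A x a).IsHermitian) (hsum : ∀ x, ∑ a, A x a = 1)
    (hcomm : ∀ x a, Commute (A x a) M) (hidem : ∀ x a, A x a * A x a * M = A x a * M)
    {p : Fin k → Fin k → Fin n → Fin n → ℝ}
    (hp : ∀ x y a b, (p x y a b : ℂ) = (A x a * A y b * M).trace) :
    p ∈ closure (MatTracialPVMCorr k n) := by
  let φ := Unitary.conjStarAlgAut ℂ _ (star hM.1.eigenvectorUnitary)
  set w := hM.1.eigenvalues
  have hφM : φ M = diagonal fun i => (w i : ℂ) := hM.1.conjStarAlgAut_star_eigenvectorUnitary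
  have htrace : ∀ X, (φ X).trace = X.trace := fun X => by
    rw [Unitary.conjStarAlgAut_apply, trace_mul_cycle, Unitary.coe_star_mul_self, Matrix.one_mul]
  have hweighted : ∀ x, IsWeightedPVM w fun a => φ (A x a) := fun x =>
    { isHermitian a := by
        rw [IsHermitian, ← star_eq_conjTranspose, ← map_star, star_eq_conjTranspose, (hA x a).eq]
      sum_eq_one := by rw [← map_sum, hsum x, map_one]
      apply_eq_zero a i j hij := apply_eq_zero_of_commute_diagonal (hφM ▸ (hcomm x a).map φ)
        (by exact_mod_cast hij)
      mul_self_apply a i j hj := apply_eq_of_mul_diagonal_eq (d := fun i => (w i : ℂ))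
        (by rw [← hφM, ← map_mul, ← map_mul, hidem, map_mul]) i (by exact_mod_cast hj) }
  have hpw : p = weightedCorr w fun x a => φ (A x a) := by
    ext x y a b
    rw [← Complex.ofReal_re (p x y a b), hp, ← htrace, map_mul, map_mul, hφM, weightedCorr, trace,
      Complex.re_sum]
    simp [mul_diagonal, mul_comm]
  have hw1 : ∑ i, w i = 1 := by
    have h : ((∑ i, w i : ℝ) : ℂ) = 1 := by
      rw [← hM1, hM.1.trace_eq_sum_eigenvalues, Complex.ofReal_sum]
      rfl
    exact_mod_cast h
  rw [hpw]
  exact weightedCorr_mem_closure hM.eigenvalues_nonneg hw1 hweighted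

section QuantumCorrelations

variable {α β : Type*} [Fintype α] [Fintype β]

theorem star_dotProduct_kronecker_mulVec {R : Type*} [CommSemiring R] [StarRing R]
    (A : Matrix α α R) (B : Matrix β β R) (ξ : α × β → R) :
    star ξ ⬝ᵥ ((A ⊗ₖ B) *ᵥ ξ) =
      (A * of (Function.curry ξ) * Bᵀ * (of (Function.curry ξ))ᴴ).trace := by
  simp only [trace, diag, mul_apply, conjTranspose_apply, transpose_apply, of_apply,
    Function.curry_apply, dotProduct, mulVec, Pi.star_apply, kroneckerMap_apply,
    Fintype.sum_prod_type, Finset.sum_mul, Finset.mul_sum]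
  refine Finset.sum_congr rfl fun i _ => Finset.sum_congr rfl fun j _ => ?_
  rw [Finset.sum_comm]
  refine Finset.sum_congr rfl fun l _ => Finset.sum_congr rfl fun m _ => ?_
  ring

variable {γ R : Type*} [Fintype γ] [Semiring R]

theorem mul_mul_eq_left_of_sum_eq_one [DecidableEq β] {A : Matrix α α R} {X : Matrix α β R}
    {B : γ → Matrix β β R} (hB : ∑ c, B c = 1) {c : γ} (h : ∀ c', c' ≠ c → A * X * B c' = 0) :
    A * X * B c = A * X :=
  calc A * X * B c = ∑ c', A * X * B c' :=
        (Finset.sum_eq_single c (fun c' _ hc' => h c' hc') (by simp)).symm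
    _ = A * X := by rw [← Matrix.mul_sum, hB, Matrix.mul_one]

theorem mul_mul_eq_right_of_sum_eq_one [DecidableEq α] {A : γ → Matrix α α R} {X : Matrix α β R}
    {B : Matrix β β R} (hA : ∑ c, A c = 1) {c : γ} (h : ∀ c', c' ≠ c → A c' * X * B = 0) :
    A c * X * B = X * B :=
  calc A c * X * B = ∑ c', A c' * X * B :=
        (Finset.sum_eq_single c (fun c' _ hc' => h c' hc') (by simp)).symm
    _ = X * B := by rw [← Matrix.sum_mul, ← Matrix.sum_mul, hA, Matrix.one_mul]

end QuantumCorrelations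

theorem mem_closure_matTracialPVMCorr_of_intertwining {k n : ℕ} {α β : Type*} [Fintype α]
    [DecidableEq α] [Fintype β] {X : Matrix α β ℂ} (hX : (X * Xᴴ).trace = 1)
    {A : Fin k → Fin n → Matrix α α ℂ} {B : Fin k → Fin n → Matrix β β ℂ}
    (hA : ∀ x a, (A x a).IsHermitian) (hsum : ∀ x, ∑ a, A x a = 1)
    (hB : ∀ x a, (B x a).IsHermitian) (hAXB : ∀ x a, A x a * X * B x a = A x a * X)
    (hAX : ∀ x a, A x a * X = X * B x a) {p : Fin k → Fin k → Fin n → Fin n → ℝ}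
    (hp : ∀ x y a b, (p x y a b : ℂ) = (A x a * X * B y b * Xᴴ).trace) :
    p ∈ closure (MatTracialPVMCorr k n) := by
  refine mem_closure_matTracialPVMCorr_of_density (posSemidef_self_mul_conjTranspose X) hX hA hsum
    (fun x a => ?_) (fun x a => ?_) (fun x y a b => ?_)
  · calc A x a * (X * Xᴴ) = X * (B x a * Xᴴ) := by rw [← Matrix.mul_assoc, hAX, Matrix.mul_assoc]
      _ = X * (A x a * X)ᴴ := by rw [hAX, conjTranspose_mul, (hB x a).eq]
      _ = X * Xᴴ * A x a := by rw [conjTranspose_mul, (hA x a).eq, Matrix.mul_assoc]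
  · calc A x a * A x a * (X * Xᴴ) = A x a * (A x a * X) * Xᴴ := by simp only [Matrix.mul_assoc]
      _ = A x a * (X * Xᴴ) := by rw [hAX, ← Matrix.mul_assoc, hAXB, Matrix.mul_assoc]
  · rw [hp, Matrix.mul_assoc (A x a) X, ← hAX, ← Matrix.mul_assoc, ← Matrix.mul_assoc,
      Matrix.mul_assoc _ X]

theorem syncQCorr_subset_closure_matTracialPVMCorr (k n : ℕ) :
    {p ∈ QCorr k n | Synchronous p} ⊆ closure (MatTracialPVMCorr k n) := by
  rintro p ⟨⟨dA, dB, A, B, ξ, hA, hB, hξ, hp⟩, hsync⟩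
  set X := of (Function.curry ξ)
  have hBt : ∀ y b, ((B y b)ᵀ).PosSemidef := fun y b => ((hB y).1 b).transpose
  have hBt_sum : ∀ y, ∑ b, (B y b)ᵀ = 1 := fun y => by
    rw [← transpose_sum, (hB y).2, transpose_one]
  have hpX : ∀ x y a b, (p x y a b : ℂ) = (A x a * X * (B y b)ᵀ * Xᴴ).trace := fun x y a b => by
    rw [hp, star_dotProduct_kronecker_mulVec]
  have hX : (X * Xᴴ).trace = 1 := by
    have h := star_dotProduct_kronecker_mulVec (1 : Matrix (Fin dA) (Fin dA) ℂ) 1 ξ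
    rwa [one_kronecker_one, one_mulVec, hξ, transpose_one, Matrix.mul_one, Matrix.one_mul,
      eq_comm] at h
  have horth : ∀ x a b, a ≠ b → A x a * X * (B x b)ᵀ = 0 := fun x a b hab =>
    ((hA x).1 a).mul_mul_eq_zero_of_trace_eq_zero (hBt x b)
      (by rw [← hpX, hsync x a b hab, Complex.ofReal_zero])
  have hAXB : ∀ x a, A x a * X * (B x a)ᵀ = A x a * X := fun x a =>
    mul_mul_eq_left_of_sum_eq_one (hBt_sum x) fun b hb => horth x a b hb.symm
  exact mem_closure_matTracialPVMCorr_of_intertwining hX (fun x a => ((hA x).1 a).isHermitian)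
    (fun x => (hA x).2) (fun x a => (hBt x a).isHermitian) hAXB
    (fun x a => (hAXB x a).symm.trans
      (mul_mul_eq_right_of_sum_eq_one (hA x).2 fun b hb => horth x b a hb)) hpX

theorem matTracialPVMCorr_subset_syncQCorr (k n : ℕ) :
    MatTracialPVMCorr k n ⊆ {p ∈ QCorr k n | Synchronous p} := by
  rintro p ⟨d, hd, e, hproj, hsum, hp⟩
  have he : ∀ x, IsPVM (e x) := fun x => ⟨fun a => ⟨(hproj x a).2, (hproj x a).1⟩, hsum x⟩
  have hpsd : ∀ x a, (e x a).PosSemidef := fun x a =>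
    nonneg_iff_posSemidef.mp ((he x).isStarProjection a).nonneg
  let c : ℂ := ((√(d : ℝ))⁻¹ : ℝ)
  have hc : star c * c = (d : ℂ)⁻¹ := by
    rw [Complex.star_def, Complex.conj_ofReal, ← Complex.ofReal_mul, ← mul_inv,
      Real.mul_self_sqrt (Nat.cast_nonneg d), Complex.ofReal_inv, Complex.ofReal_natCast]
  let ξ : Fin d × Fin d → ℂ := fun q => (c • (1 : Matrix (Fin d) (Fin d) ℂ)) q.1 q.2
  have hcorr : ∀ X Y : Matrix (Fin d) (Fin d) ℂ,
      star ξ ⬝ᵥ ((X ⊗ₖ Yᵀ) *ᵥ ξ) = (X * Y).trace / d := fun X Y => by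
    rw [star_dotProduct_kronecker_mulVec, transpose_transpose]
    change (X * (c • 1) * Y * (c • 1)ᴴ).trace = _
    simp only [conjTranspose_smul, conjTranspose_one, Matrix.mul_smul, Matrix.smul_mul,
      Matrix.mul_one, trace_smul, smul_smul, smul_eq_mul, hc, div_eq_inv_mul]
  refine ⟨⟨d, d, e, fun y b => (e y b)ᵀ, ξ, fun x => ⟨hpsd x, hsum x⟩,
    fun y => ⟨fun b => (hpsd y b).transpose, by rw [← transpose_sum, hsum, transpose_one]⟩, ?_,
    fun x y a b => by rw [hp, hcorr]⟩, fun x a b hab => ?_⟩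
  · have h := hcorr 1 1
    rwa [transpose_one, one_kronecker_one, one_mulVec, Matrix.mul_one, trace_one, Fintype.card_fin,
      div_self (Nat.cast_ne_zero.mpr (by omega))] at h
  · have h := hp x x a b
    rwa [(he x).mul_eq_zero hab, trace_zero, zero_div, Complex.ofReal_eq_zero] at h

theorem closure_sync_q_eq_closure_matrix_tracial_pvm_general (k n : ℕ) :
    closure { p ∈ QCorr k n | Synchronous p } = closure (MatTracialPVMCorr k n) :=
  (closure_minimal (syncQCorr_subset_closure_matTracialPVMCorr k n) isClosed_closure).antisymm
    (closure_mono (matTracialPVMCorr_subset_syncQCorr k n))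

/-- For all `k, n ≥ 2`, the closure of the set `C^s_q(k,n)` of synchronous quantum
correlations equals the closure of the set of matrix tracial PVM correlations. -/
theorem closure_sync_q_eq_closure_matrix_tracial_pvm (k n : ℕ) (hk : 2 ≤ k) (hn : 2 ≤ n) :
    closure { p ∈ QCorr k n | Synchronous p } = closure (MatTracialPVMCorr k n) :=
  closure_sync_q_eq_closure_matrix_tracial_pvm_general k n
end
end
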